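/- arXiv:math/0111069 — 5 statements merged into one kernel-verified Lean document; each statement's English description precedes it below -/
import Mathlib

section
/- Let μ be a probability measure on (0,∞) whose distribution function F(x) = μ((0,x]) satisfies F(x) > 0 for every x > 0 and is slowly varying at 0, i.e. lim_{x→0+} F(tx)/F(x) = 1 for every t > 0. Then μ is not selfdecomposable. (Theorem 2.) -/
open MeasureTheory Filter Set

/-- A probability measure `μ` on `[0,∞)` is selfdecomposable if for every `c ∈ (0,1)`
there is a probability measure `μ_c` on `[0,∞)` with `μ = μ_c ∗ (x ↦ c·x)_*μ`. -/
def SelfDecomposable (μ : Measure ℝ) : Prop :=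
  ∀ c ∈ Set.Ioo (0:ℝ) 1, ∃ μc : Measure ℝ, IsProbabilityMeasure μc ∧ μc (Set.Iio 0) = 0 ∧
    μ = Measure.conv μc (Measure.map (fun x => c * x) μ)

/-- **Theorem 2.** If a probability measure on `(0,∞)` has a distribution function
`F(x) = μ((0,x])` that is positive for every `x > 0` and slowly varying at `0`
(i.e. `F(tx)/F(x) → 1` as `x → 0⁺` for all `t > 0`), then `μ` is not selfdecomposable. -/
theorem slowly_varying_df_not_selfdecomposable
    (μ : Measure ℝ) [IsProbabilityMeasure μ] (hμ : μ (Set.Iic 0) = 0)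
    (hpos : ∀ x > (0:ℝ), 0 < (μ (Set.Ioc 0 x)).toReal)
    (hSV : ∀ t > (0:ℝ),
      Tendsto (fun x => (μ (Set.Ioc 0 (t * x))).toReal / (μ (Set.Ioc 0 x)).toReal)
        (nhdsWithin 0 (Set.Ioi 0)) (nhds 1)) :
    ¬ SelfDecomposable μ := by
  intro h
  obtain ⟨μc, hprob, hμc0, hconv⟩ := h (1/2) (by norm_num)
  set ν : Measure ℝ := Measure.map (fun x => (1/2:ℝ) * x) μ with hν
  haveI : IsProbabilityMeasure ν := Measure.isProbabilityMeasure_map (by fun_prop)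
  -- basic facts about ν
  have hνIic : ∀ x : ℝ, ν (Set.Iic x) = μ (Set.Iic (2*x)) := by
    intro x
    rw [hν, Measure.map_apply (by fun_prop) measurableSet_Iic]
    congr 1
    ext y
    simp only [mem_preimage, mem_Iic]
    constructor <;> intro hy <;> linarith
  have hν0 : ν (Set.Iio 0) = 0 := by
    rw [hν, Measure.map_apply (by fun_prop) measurableSet_Iio]
    refine measure_mono_null ?_ hμ
    intro y hy
    simp only [mem_preimage, mem_Iio] at hy
    simp only [mem_Iic]
    linarith
  -- μ (Iic x) via the convolution
  have hc : ∀ x : ℝ, μ (Set.Iic x) =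
      (μc.prod ν) ((fun p : ℝ × ℝ => p.1 + p.2) ⁻¹' Set.Iic x) := by
    intro x
    conv_lhs => rw [hconv]
    rw [Measure.conv, Measure.map_apply (by fun_prop) measurableSet_Iic]
  -- upper bound
  have hupper : ∀ x : ℝ, μ (Set.Iic x) ≤ μc (Set.Iic x) * μ (Set.Iic (2*x)) := by
    intro x
    rw [hc x]
    have hsub : (fun p : ℝ × ℝ => p.1 + p.2) ⁻¹' Set.Iic x ⊆
        (Set.Iic x ×ˢ Set.Iic x) ∪ (Set.Iio 0 ×ˢ univ) ∪ (univ ×ˢ Set.Iio 0) := by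
      rintro ⟨a, b⟩ hp
      simp only [mem_preimage, mem_Iic] at hp
      by_cases ha : a < 0
      · exact Or.inl (Or.inr (by simp [ha]))
      by_cases hb : b < 0
      · exact Or.inr (by simp [hb])
      push_neg at ha hb
      exact Or.inl (Or.inl ⟨by simp; linarith, by simp; linarith⟩)
    calc (μc.prod ν) ((fun p : ℝ × ℝ => p.1 + p.2) ⁻¹' Set.Iic x)
        ≤ (μc.prod ν) ((Set.Iic x ×ˢ Set.Iic x) ∪ (Set.Iio 0 ×ˢ univ) ∪ (univ ×ˢ Set.Iio 0)) :=
          measure_mono hsub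
      _ ≤ (μc.prod ν) (Set.Iic x ×ˢ Set.Iic x) + (μc.prod ν) (Set.Iio 0 ×ˢ univ)
            + (μc.prod ν) (univ ×ˢ Set.Iio 0) :=
          le_trans (measure_union_le _ _) (by gcongr; exact measure_union_le _ _)
      _ = μc (Set.Iic x) * ν (Set.Iic x) := by
          rw [Measure.prod_prod, Measure.prod_prod, Measure.prod_prod, hμc0, hν0]
          simp
      _ = μc (Set.Iic x) * μ (Set.Iic (2*x)) := by rw [hνIic]
  -- lower bound
  have hlower : ∀ x : ℝ, μc (Set.Iic 0) * μ (Set.Iic (2*x)) ≤ μ (Set.Iic x) := by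
    intro x
    rw [hc x, ← hνIic, ← Measure.prod_prod]
    refine measure_mono ?_
    rintro ⟨a, b⟩ ⟨ha, hb⟩
    simp only [mem_Iic] at ha hb
    simp only [mem_preimage, mem_Iic]
    linarith
  -- F(x) = μ(Ioc 0 x) = μ(Iic x) for x ≥ 0
  have hF : ∀ x : ℝ, 0 ≤ x → μ (Set.Ioc 0 x) = μ (Set.Iic x) := by
    intro x hx
    refine le_antisymm (measure_mono Ioc_subset_Iic_self) ?_
    calc μ (Set.Iic x) ≤ μ (Set.Iic 0 ∪ Set.Ioc 0 x) := by
          refine measure_mono fun y hy => ?_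
          simp only [mem_Iic] at hy
          by_cases h0 : y ≤ 0
          · exact Or.inl h0
          · exact Or.inr ⟨by linarith, hy⟩
      _ ≤ μ (Set.Iic 0) + μ (Set.Ioc 0 x) := measure_union_le _ _
      _ = μ (Set.Ioc 0 x) := by rw [hμ, zero_add]
  -- μc (Iic x0) = 1 for every x0 > 0
  have hμc1 : ∀ x0 : ℝ, 0 < x0 → μc (Set.Iic x0) = 1 := by
    intro x0 hx0
    have hT : Tendsto (fun x => (μ (Set.Ioc 0 x)).toReal / (μ (Set.Ioc 0 (2*x))).toReal)
        (nhdsWithin 0 (Set.Ioi 0)) (nhds 1) := by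
      have h2 : Tendsto (fun x : ℝ => 2*x) (nhdsWithin 0 (Set.Ioi 0)) (nhdsWithin 0 (Set.Ioi 0)) := by
        apply tendsto_nhdsWithin_of_tendsto_nhds_of_eventually_within
        · have : Tendsto (fun x : ℝ => 2*x) (nhds 0) (nhds (2*0)) :=
            (continuous_const.mul continuous_id).tendsto 0
          simpa using this.mono_left nhdsWithin_le_nhds
        · filter_upwards [self_mem_nhdsWithin] with x hx
          simp only [mem_Ioi] at hx ⊢
          linarith
      have := (hSV (1/2) (by norm_num)).comp h2
      refine this.congr fun x => ?_
      have hxx : (1/2 : ℝ) * (2*x) = x := by ring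
      simp only [Function.comp]
      rw [hxx]
    have hge : (1:ℝ) ≤ (μc (Set.Iic x0)).toReal := by
      refine le_of_tendsto hT ?_
      filter_upwards [Ioo_mem_nhdsGT_of_mem (by exact ⟨le_refl (0:ℝ), hx0⟩)] with x hx
      obtain ⟨hx1, hx2⟩ := hx
      have h2x : (0:ℝ) < 2*x := by linarith
      have hle := hupper x
      rw [← hF x (le_of_lt hx1), ← hF (2*x) (le_of_lt h2x)] at hle
      have hfin : μ (Set.Ioc 0 (2*x)) ≠ ⊤ := measure_ne_top _ _
      have hfin2 : μc (Set.Iic x) ≠ ⊤ := measure_ne_top _ _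
      have hR : (μ (Set.Ioc 0 x)).toReal ≤ (μc (Set.Iic x)).toReal * (μ (Set.Ioc 0 (2*x))).toReal := by
        rw [← ENNReal.toReal_mul]
        exact ENNReal.toReal_mono (ENNReal.mul_ne_top hfin2 hfin) hle
      have hdiv : (μ (Set.Ioc 0 x)).toReal / (μ (Set.Ioc 0 (2*x))).toReal ≤ (μc (Set.Iic x)).toReal := by
        rw [div_le_iff₀ (hpos (2*x) h2x)]
        linarith [hR]
      refine hdiv.trans ?_
      exact ENNReal.toReal_mono (measure_ne_top _ _) (measure_mono (Iic_subset_Iic.2 (by linarith)))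
    have hle1 : μc (Set.Iic x0) ≤ 1 := prob_le_one
    have := ENNReal.toReal_mono (by norm_num) hle1
    simp only [ENNReal.toReal_one] at this
    have h1' : (1:ENNReal) ≤ μc (Set.Iic x0) := by
      rw [← ENNReal.ofReal_one]
      exact ENNReal.ofReal_le_of_le_toReal hge
    exact le_antisymm hle1 h1'
  -- μc (Iic 0) = 1
  have hμcIic0 : μc (Set.Iic 0) = 1 := by
    have hanti : Antitone (fun n : ℕ => Set.Iic ((1/2:ℝ)^n)) := by
      intro n m hnm
      exact Iic_subset_Iic.2 (pow_le_pow_of_le_one (by norm_num) (by norm_num) hnm)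
    have hInt : (⋂ n : ℕ, Set.Iic ((1/2:ℝ)^n)) = Set.Iic 0 := by
      ext y
      simp only [mem_iInter, mem_Iic]
      constructor
      · intro hy
        by_contra hy0
        push_neg at hy0
        obtain ⟨n, hn⟩ := exists_pow_lt_of_lt_one hy0 (by norm_num : (1/2:ℝ) < 1)
        exact absurd (hy n) (not_le.2 hn)
      · intro hy n
        exact hy.trans (pow_nonneg (by norm_num) n)
    have hTend := tendsto_measure_iInter_atTop (μ := μc)
      (fun n => (measurableSet_Iic).nullMeasurableSet) hanti ⟨0, measure_ne_top _ _⟩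
    rw [hInt] at hTend
    have hconst : (μc ∘ fun n : ℕ => Set.Iic ((1/2:ℝ)^n)) = fun _ => (1 : ENNReal) := by
      funext n
      exact hμc1 _ (pow_pos (by norm_num) n)
    rw [hconst] at hTend
    exact (tendsto_nhds_unique tendsto_const_nhds hTend).symm
  -- hence μ(Iic x) = μ(Iic 2x)
  have hdouble : ∀ x : ℝ, 0 < x → μ (Set.Iic (2*x)) = μ (Set.Iic x) := by
    intro x hx
    refine le_antisymm ?_ (measure_mono (Iic_subset_Iic.2 (by linarith)))
    have := hlower x
    rwa [hμcIic0, one_mul] at this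
  -- μ (Iic 1) = 1
  have hIic1 : μ (Set.Iic (1:ℝ)) = 1 := by
    have hmono : Monotone (fun n : ℕ => Set.Iic ((2:ℝ)^n)) := fun n m hnm =>
      Iic_subset_Iic.2 (pow_le_pow_right₀ (by norm_num) hnm)
    have hUn : (⋃ n : ℕ, Set.Iic ((2:ℝ)^n)) = univ := by
      ext y
      simp only [mem_iUnion, mem_Iic, mem_univ, iff_true]
      obtain ⟨n, hn⟩ := pow_unbounded_of_one_lt y (by norm_num : (1:ℝ) < 2)
      exact ⟨n, hn.le⟩
    have hTend := tendsto_measure_iUnion_atTop (μ := μ) hmono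
    rw [hUn, measure_univ] at hTend
    have hconst : (μ ∘ fun n : ℕ => Set.Iic ((2:ℝ)^n)) = fun _ => μ (Set.Iic (1:ℝ)) := by
      funext n
      induction n with
      | zero => simp
      | succ n ih =>
        simp only [Function.comp] at ih ⊢
        rw [← ih, pow_succ, mul_comm ((2:ℝ)^n) 2, hdouble _ (pow_pos (by norm_num) n)]
    rw [hconst] at hTend
    exact tendsto_nhds_unique tendsto_const_nhds hTend
  -- μ (Iic (1/2)^n) = 1
  have hsmall : ∀ n : ℕ, μ (Set.Iic ((1/2:ℝ)^n)) = 1 := by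
    intro n
    induction n with
    | zero => simpa using hIic1
    | succ n ih =>
      rw [← ih]
      have hxx : (2:ℝ) * (1/2)^(n+1) = (1/2)^n := by
        rw [pow_succ]; ring
      rw [← hxx]
      exact (hdouble ((1/2:ℝ)^(n+1)) (pow_pos (by norm_num : (0:ℝ) < 1/2) (n+1))).symm
  -- continuity from above: μ (Iic 0) = 1, contradiction
  have hμIic0 : μ (Set.Iic 0) = 1 := by
    have hanti : Antitone (fun n : ℕ => Set.Iic ((1/2:ℝ)^n)) := fun n m hnm =>
      Iic_subset_Iic.2 (pow_le_pow_of_le_one (by norm_num) (by norm_num) hnm)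
    have hInt : (⋂ n : ℕ, Set.Iic ((1/2:ℝ)^n)) = Set.Iic 0 := by
      ext y
      simp only [mem_iInter, mem_Iic]
      constructor
      · intro hy
        by_contra hy0
        push_neg at hy0
        obtain ⟨n, hn⟩ := exists_pow_lt_of_lt_one hy0 (by norm_num : (1/2:ℝ) < 1)
        exact absurd (hy n) (not_le.2 hn)
      · intro hy n
        exact hy.trans (pow_nonneg (by norm_num) n)
    have hTend := tendsto_measure_iInter_atTop (μ := μ)
      (fun n => (measurableSet_Iic).nullMeasurableSet) hanti ⟨0, measure_ne_top _ _⟩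
    rw [hInt] at hTend
    have hconst : (μ ∘ fun n : ℕ => Set.Iic ((1/2:ℝ)^n)) = fun _ => (1 : ENNReal) := by
      funext n; exact hsmall n
    rw [hconst] at hTend
    exact (tendsto_nhds_unique tendsto_const_nhds hTend).symm
  rw [hμ] at hμIic0
  exact zero_ne_one hμIic0
end

section
/- Fix ρ > 0. Suppose Φ : [0,∞) → (0,1] is differentiable on (0,∞), continuous at 0 with Φ(0) = 1, not identically 1, and satisfies the equation s Φ'(s) = ρ Φ(s)(Φ(s) − 1) for all s > 0 (equivalently, Φ(s) = exp(−ρ ∫₀^s (1 − Φ(u)) u^{−1} du), i.e. Φ is the Laplace transform of a shot noise distribution generated by a jump law whose Laplace transform is Φ itself). Then there exists β > 0 such that Φ(s) = 1/(1 + β s^ρ) for all s ≥ 0. (The positive Linnik laws are the only SN distributions generated by themselves.) -/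
open Set

/-! The equation `s Φ' = ρ Φ (Φ - 1)` is a Bernoulli equation: for `Ψ = 1/Φ - 1` it becomes the
linear equation `s Ψ' = ρ Ψ`, so `Ψ(s) s^(-ρ)` is constant on `(0, ∞)`. Calling this constant
`β`, we get `Φ(s) = 1/(1 + β s^ρ)` for `s > 0`; `β > 0` because `Φ < 1` somewhere, and the formula
also holds at `s = 0` since `0^ρ = 0`. -/

/-- The `β` for which `Φ s = 1 / (1 + β * s ^ ρ)`. -/
noncomputable def linnikScale (ρ : ℝ) (Φ : ℝ → ℝ) (s : ℝ) : ℝ :=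
  ((Φ s)⁻¹ - 1) * s ^ (-ρ)

theorem hasDerivAt_linnikScale {ρ s : ℝ} {Φ : ℝ → ℝ} (hs : 0 < s) (hΦs : Φ s ≠ 0)
    (hΦ : HasDerivAt Φ (ρ * Φ s * (Φ s - 1) / s) s) :
    HasDerivAt (linnikScale ρ Φ) 0 s := by
  have hpow : HasDerivAt (fun t : ℝ => t ^ (-ρ)) (-ρ * s ^ (-ρ - 1)) s :=
    Real.hasDerivAt_rpow_const (Or.inl hs.ne')
  refine (((hΦ.inv hΦs).sub_const 1).mul hpow).congr_deriv ?_
  rw [Real.rpow_sub hs, Real.rpow_one, Pi.inv_apply]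
  field_simp
  ring

theorem linnikScale_eq_of_pos {ρ a b : ℝ} {Φ : ℝ → ℝ}
    (h : ∀ s > 0, HasDerivAt (linnikScale ρ Φ) 0 s) (ha : 0 < a) (hb : 0 < b) :
    linnikScale ρ Φ a = linnikScale ρ Φ b :=
  isOpen_Ioi.is_const_of_deriv_eq_zero isPreconnected_Ioi
    (fun s hs => (h s hs).differentiableAt.differentiableWithinAt)
    (fun s hs => (h s hs).deriv) ha hb

theorem linnikScale_pos {ρ s : ℝ} {Φ : ℝ → ℝ} (hs : 0 < s) (hΦ : Φ s ∈ Ioo (0 : ℝ) 1) :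
    0 < linnikScale ρ Φ s := by
  have : 1 < (Φ s)⁻¹ := (one_lt_inv₀ hΦ.1).mpr hΦ.2
  exact mul_pos (by linarith) (Real.rpow_pos_of_pos hs _)

theorem eq_one_div_one_add_linnikScale_mul_rpow {ρ s : ℝ} {Φ : ℝ → ℝ} (hs : 0 < s)
    (hΦs : Φ s ≠ 0) : Φ s = 1 / (1 + linnikScale ρ Φ s * s ^ ρ) := by
  have hpow : s ^ ρ ≠ 0 := (Real.rpow_pos_of_pos hs ρ).ne'
  rw [linnikScale, Real.rpow_neg hs.le, mul_assoc, inv_mul_cancel₀ hpow]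
  field_simp
  ring

theorem self_generated_shot_noise_is_linnik_general
    (ρ : ℝ) (hρ : 0 < ρ) (Φ : ℝ → ℝ)
    (hrange : ∀ s ≥ (0:ℝ), Φ s ∈ Set.Ioc (0:ℝ) 1)
    (hΦ0 : Φ 0 = 1)
    (hne : ¬ ∀ s ≥ (0:ℝ), Φ s = 1)
    (hODE : ∀ s > (0:ℝ), HasDerivAt Φ (ρ * Φ s * (Φ s - 1) / s) s) :
    ∃ β > (0:ℝ), ∀ s ≥ (0:ℝ), Φ s = 1 / (1 + β * s ^ ρ) := by
  have hconst : ∀ s > (0:ℝ), HasDerivAt (linnikScale ρ Φ) 0 s := fun s hs =>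
    hasDerivAt_linnikScale hs (hrange s hs.le).1.ne' (hODE s hs)
  push Not at hne
  obtain ⟨s₀, hs₀, hΦs₀⟩ := hne
  have hs₀pos : 0 < s₀ := hs₀.lt_of_ne (by rintro rfl; exact hΦs₀ hΦ0)
  have hΦs₀lt : Φ s₀ < 1 := (hrange s₀ hs₀).2.lt_of_ne hΦs₀
  refine ⟨linnikScale ρ Φ s₀, linnikScale_pos hs₀pos ⟨(hrange s₀ hs₀).1, hΦs₀lt⟩,
    fun s hs => ?_⟩
  rcases hs.lt_or_eq with hspos | rfl
  · rw [← linnikScale_eq_of_pos hconst hspos hs₀pos]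
    exact eq_one_div_one_add_linnikScale_mul_rpow hspos (hrange s hs).1.ne'
  · rw [hΦ0, Real.zero_rpow hρ.ne']
    norm_num

/-- **(Uniqueness of self-generated shot noise laws.)** Fix `ρ > 0`. If `Φ : [0,∞) → (0,1]`
is differentiable on `(0,∞)`, continuous at `0` (from the right) with `Φ(0) = 1`, not
identically `1`, and satisfies `s Φ'(s) = ρ Φ(s)(Φ(s) − 1)` for `s > 0` (i.e. `Φ` is the
Laplace transform of a shot noise distribution generated by itself), then
`Φ(s) = 1/(1+βs^ρ)` for some `β > 0`: the positive Linnik laws are the only shot noise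
distributions generated by themselves. -/
theorem self_generated_shot_noise_is_linnik
    (ρ : ℝ) (hρ : 0 < ρ) (Φ : ℝ → ℝ)
    (hrange : ∀ s ≥ (0:ℝ), Φ s ∈ Set.Ioc (0:ℝ) 1)
    (hΦ0 : Φ 0 = 1)
    (hcont : ContinuousWithinAt Φ (Set.Ici 0) 0)
    (hne : ¬ ∀ s ≥ (0:ℝ), Φ s = 1)
    (hODE : ∀ s > (0:ℝ), HasDerivAt Φ (ρ * Φ s * (Φ s - 1) / s) s) :
    ∃ β > (0:ℝ), ∀ s ≥ (0:ℝ), Φ s = 1 / (1 + β * s ^ ρ) :=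
  self_generated_shot_noise_is_linnik_general ρ hρ Φ hrange hΦ0 hne hODE
end

section
/- Let ρ₁, ρ₂ > 0, let ν₁, ν₂ be Borel probability measures on (0,∞), and set Φ₁ = Φ_{ρ₁,ν₁}, Φ₂ = Φ_{ρ₂,ν₂}. Suppose μ₃ is a probability measure on (0,∞) whose Laplace transform equals Φ₃(s) := Φ₂(−log Φ₁(s)) for all s ≥ 0 (the law at time 1 of the Lévy subordinator with one-dimensional law Φ₁ subordinated by the one with law Φ₂). Then Φ₃ is slowly varying at infinity, and consequently μ₃ is not selfdecomposable. (Proposition 3.1.) -/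
/-!
Write `Φ_{ρ,ν} = exp (-ρ E_ν)` with `E_ν s = ∫₀^s (1 - ψ_ν u) / u du`. As `0 ≤ 1 - ψ_ν ≤ 1`, the
exponent is `1`-Lipschitz in `log s`, and as `ψ_ν → 0` it tends to `∞`. So `F = ρ₁ E_{ν₁}` tends to
`∞` while `F (t s) - F s` stays bounded; hence `log F (t s) - log F s → 0`, and by the Lipschitz
bound for `E_{ν₂}` also `E_{ν₂} (F (t s)) - E_{ν₂} (F s) → 0`: `Φ₃ = exp (-ρ₂ E_{ν₂} ∘ F)` is slowly
varying. If `μ₃ = μ_c ∗ (c ·)_* μ₃` with `c = 1/2`, then `ψ_{μ_c} s = Φ₃ s / Φ₃ (s / 2) → 1`, and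
since `ψ_{μ_c}` is antitone and at most `1` this forces `ψ_{μ_c} 1 = 1`, i.e. `Φ₃ 1 = Φ₃ (1/2)`,
contradicting the strict monotonicity of the Laplace transform of a law on `(0, ∞)`.
-/

open MeasureTheory Filter Set

/-- Laplace transform of a (probability) measure on `ℝ`. -/
noncomputable def laplaceTransform (μ : Measure ℝ) (s : ℝ) : ℝ :=
  ∫ x, Real.exp (-s * x) ∂μ

/-- The Laplace transform `Φ_{ρ,ν}` of the shot noise distribution with exponent `ρ`
and jump law `ν`:  `Φ_{ρ,ν}(s) = exp(−ρ ∫₀^s (1 − ψ_ν(u)) u⁻¹ du)`. -/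
noncomputable def snLT (ρ : ℝ) (ν : Measure ℝ) (s : ℝ) : ℝ :=
  Real.exp (-ρ * ∫ u in Set.Ioc (0:ℝ) s, (1 - laplaceTransform ν u) / u)

open Real Asymptotics Topology

theorem integral_pos_of_ae_pos {α : Type*} [MeasurableSpace α] {μ : Measure α} [NeZero μ]
    {f : α → ℝ} (hf : ∀ᵐ x ∂μ, 0 < f x) (hfi : Integrable f μ) : 0 < ∫ x, f x ∂μ := by
  have hsupport : Function.support f =ᵐ[μ] univ :=
    ae_eq_univ.2 (mem_ae_iff.1 (hf.mono fun _ h => h.ne'))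
  rw [integral_pos_iff_support_of_nonneg_ae (hf.mono fun _ h => h.le) hfi, measure_congr hsupport]
  exact Measure.measure_univ_pos.2 (NeZero.ne μ)

theorem laplaceTransform_conv (μ κ : Measure ℝ) [SFinite μ] [SFinite κ] (s : ℝ) :
    laplaceTransform (μ.conv κ) s = laplaceTransform μ s * laplaceTransform κ s := by
  rw [laplaceTransform, Measure.conv,
    integral_map (μ := μ.prod κ) (φ := fun p => p.1 + p.2) (by fun_prop) (by fun_prop)]
  simp only [laplaceTransform, mul_add, exp_add]
  exact integral_prod_mul (fun x => exp (-s * x)) (fun y => exp (-s * y))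

theorem laplaceTransform_map_const_mul (μ : Measure ℝ) (c s : ℝ) :
    laplaceTransform (μ.map (c * ·)) s = laplaceTransform μ (c * s) := by
  rw [laplaceTransform, integral_map (by fun_prop) (by fun_prop)]
  simp only [laplaceTransform, neg_mul, mul_assoc, mul_left_comm s c]

section Laplace

variable {μ : Measure ℝ}

theorem ae_pos_of_measure_Iic_eq_zero (hμ : μ (Iic 0) = 0) : ∀ᵐ x ∂μ, 0 < x :=
  ae_iff.2 (by simp only [not_lt]; exact hμ)

theorem ae_nonneg_of_measure_Iio_eq_zero (hμ : μ (Iio 0) = 0) : ∀ᵐ x ∂μ, 0 ≤ x :=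
  ae_iff.2 (by simp only [not_le]; exact hμ)

theorem integrable_exp_neg_mul_of_ae_nonneg [IsFiniteMeasure μ] (hμ : ∀ᵐ x ∂μ, 0 ≤ x)
    {s : ℝ} (hs : 0 ≤ s) : Integrable (fun x => exp (-s * x)) μ := by
  refine (integrable_const 1).mono' (by fun_prop) ?_
  filter_upwards [hμ] with x hx
  rw [norm_of_nonneg (exp_pos _).le, exp_le_one_iff]
  nlinarith

theorem laplaceTransform_zero [IsProbabilityMeasure μ] : laplaceTransform μ 0 = 1 := by
  simp [laplaceTransform]

theorem laplaceTransform_nonneg (s : ℝ) : 0 ≤ laplaceTransform μ s :=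
  integral_nonneg fun _ => (exp_pos _).le

theorem laplaceTransform_pos [IsFiniteMeasure μ] [NeZero μ] (hμ : ∀ᵐ x ∂μ, 0 ≤ x) {s : ℝ}
    (hs : 0 ≤ s) : 0 < laplaceTransform μ s :=
  integral_exp_pos (integrable_exp_neg_mul_of_ae_nonneg hμ hs)

theorem laplaceTransform_antitoneOn [IsFiniteMeasure μ] (hμ : ∀ᵐ x ∂μ, 0 ≤ x) :
    AntitoneOn (laplaceTransform μ) (Ici 0) := by
  intro s hs s' hs' hss'
  refine integral_mono_ae (integrable_exp_neg_mul_of_ae_nonneg hμ hs')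
    (integrable_exp_neg_mul_of_ae_nonneg hμ hs) ?_
  filter_upwards [hμ] with x hx
  exact exp_le_exp.2 (by nlinarith)

theorem laplaceTransform_strictAntiOn [IsFiniteMeasure μ] [NeZero μ] (hμ : ∀ᵐ x ∂μ, 0 < x) :
    StrictAntiOn (laplaceTransform μ) (Ici 0) := by
  intro s hs s' hs' hss'
  have hμ' : ∀ᵐ x ∂μ, 0 ≤ x := hμ.mono fun _ h => h.le
  rw [← sub_pos, laplaceTransform, laplaceTransform, ← integral_sub
    (integrable_exp_neg_mul_of_ae_nonneg hμ' hs) (integrable_exp_neg_mul_of_ae_nonneg hμ' hs')]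
  refine integral_pos_of_ae_pos ?_ ((integrable_exp_neg_mul_of_ae_nonneg hμ' hs).sub
    (integrable_exp_neg_mul_of_ae_nonneg hμ' hs'))
  filter_upwards [hμ] with x hx
  exact sub_pos.2 (exp_lt_exp.2 (by nlinarith))

theorem laplaceTransform_le_one [IsProbabilityMeasure μ] (hμ : ∀ᵐ x ∂μ, 0 ≤ x) {s : ℝ}
    (hs : 0 ≤ s) : laplaceTransform μ s ≤ 1 :=
  laplaceTransform_zero (μ := μ) ▸ laplaceTransform_antitoneOn hμ self_mem_Ici hs hs

theorem laplaceTransform_lt_one [IsProbabilityMeasure μ] (hμ : ∀ᵐ x ∂μ, 0 < x) {s : ℝ}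
    (hs : 0 < s) : laplaceTransform μ s < 1 :=
  laplaceTransform_zero (μ := μ) ▸ laplaceTransform_strictAntiOn hμ self_mem_Ici hs.le hs

theorem tendsto_laplaceTransform_atTop [IsFiniteMeasure μ] (hμ : ∀ᵐ x ∂μ, 0 < x) :
    Tendsto (laplaceTransform μ) atTop (𝓝 0) := by
  have h := tendsto_integral_filter_of_dominated_convergence (μ := μ) (l := atTop)
    (F := fun s x => exp (-s * x)) (f := fun _ => 0) (fun _ => 1)
    (Eventually.of_forall fun _ => by fun_prop) ?_ (integrable_const 1) ?_
  · rwa [integral_zero] at h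
  · filter_upwards [eventually_ge_atTop 0] with s hs
    filter_upwards [hμ] with x hx
    rw [norm_of_nonneg (exp_pos _).le, exp_le_one_iff]
    nlinarith
  · filter_upwards [hμ] with x hx
    exact tendsto_exp_atBot.comp (tendsto_neg_atTop_atBot.atBot_mul_const hx)

end Laplace

theorem not_selfDecomposable_of_tendsto_div {μ : Measure ℝ} [IsProbabilityMeasure μ]
    (hμ : ∀ᵐ x ∂μ, 0 < x)
    (hslow : Tendsto (fun s => laplaceTransform μ (2⁻¹ * s) / laplaceTransform μ s) atTop (𝓝 1)) :
    ¬ SelfDecomposable μ := by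
  intro hSD
  obtain ⟨μc, _, hμc, hconv⟩ := hSD 2⁻¹ ⟨by norm_num, by norm_num⟩
  have hμc' := ae_nonneg_of_measure_Iio_eq_zero hμc
  have hfactor (s : ℝ) :
      laplaceTransform μ s = laplaceTransform μc s * laplaceTransform μ (2⁻¹ * s) := by
    conv_lhs => rw [hconv]
    rw [laplaceTransform_conv, laplaceTransform_map_const_mul]
  have hμc_lim : Tendsto (laplaceTransform μc) atTop (𝓝 1) := by
    have hinv := hslow.inv₀ one_ne_zero
    simp only [inv_div, inv_one] at hinv
    refine hinv.congr' ?_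
    filter_upwards [eventually_ge_atTop 0] with s hs
    rw [hfactor s, mul_div_assoc, div_self
      (laplaceTransform_pos (hμ.mono fun _ h => h.le) (by positivity)).ne', mul_one]
  have hμc_one : laplaceTransform μc 1 = 1 := by
    refine le_antisymm (laplaceTransform_le_one hμc' zero_le_one) (le_of_tendsto hμc_lim ?_)
    filter_upwards [eventually_ge_atTop 1] with s hs
    exact laplaceTransform_antitoneOn hμc' (mem_Ici.2 zero_le_one)
      (mem_Ici.2 (zero_le_one.trans hs)) hs
  have hstrict : laplaceTransform μ 1 < laplaceTransform μ (2⁻¹ * 1) :=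
    laplaceTransform_strictAntiOn hμ (by norm_num) (by norm_num) (by norm_num)
  rw [hfactor 1, hμc_one, one_mul] at hstrict
  exact lt_irrefl _ hstrict

theorem integrableOn_Ioc_inv {a b : ℝ} (ha : 0 < a) : IntegrableOn (fun u : ℝ => u⁻¹) (Ioc a b) :=
  have hcont : ContinuousOn (fun u : ℝ => u⁻¹) (Icc a b) :=
    continuousOn_inv₀.mono fun _ hu => (ha.trans_le (mem_Icc.1 hu).1).ne'
  hcont.integrableOn_Icc.mono_set Ioc_subset_Icc_self

theorem setIntegral_Ioc_inv {a b : ℝ} (ha : 0 < a) (hab : a ≤ b) :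
    ∫ u in Ioc a b, u⁻¹ = log b - log a := by
  rw [← intervalIntegral.integral_of_le hab, integral_inv_of_pos ha (ha.trans_le hab),
    log_div (ha.trans_le hab).ne' ha.ne']

theorem tendsto_log_sub_log_of_abs_sub_le {α : Type*} {l : Filter α} {f g : α → ℝ} {C : ℝ}
    (hf : Tendsto f l atTop) (hfg : ∀ᶠ x in l, |g x - f x| ≤ C) :
    Tendsto (fun x => log (g x) - log (f x)) l (𝓝 0) := by
  have hequiv : g ~[l] f :=
    (isBigO_one_iff ℝ |>.2 (isBoundedUnder_of_eventually_le (a := C) hfg)).trans_isLittleO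
      ((isLittleO_one_left_iff ℝ).2 (tendsto_abs_atTop_atTop.comp hf))
  have hg : Tendsto g l atTop := hequiv.symm.tendsto_atTop hf
  have hdiv := ((isEquivalent_iff_tendsto_one
    (hf.eventually_gt_atTop 0 |>.mono fun _ h => h.ne')).1 hequiv).log one_ne_zero
  rw [log_one] at hdiv
  refine hdiv.congr' ?_
  filter_upwards [hf.eventually_gt_atTop 0, hg.eventually_gt_atTop 0] with x hfx hgx
  exact log_div hgx.ne' hfx.ne'

noncomputable def shotNoiseIntegrand (ν : Measure ℝ) (u : ℝ) : ℝ :=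
  (1 - laplaceTransform ν u) / u

noncomputable def shotNoiseExponent (ν : Measure ℝ) (s : ℝ) : ℝ :=
  ∫ u in Ioc 0 s, shotNoiseIntegrand ν u

theorem snLT_eq_exp (ρ : ℝ) (ν : Measure ℝ) (s : ℝ) :
    snLT ρ ν s = exp (-(ρ * shotNoiseExponent ν s)) := by
  rw [snLT, neg_mul]
  rfl

theorem neg_log_snLT (ρ : ℝ) (ν : Measure ℝ) (s : ℝ) :
    -log (snLT ρ ν s) = ρ * shotNoiseExponent ν s := by
  rw [snLT_eq_exp, log_exp, neg_neg]

section ShotNoise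

variable {ν : Measure ℝ}

theorem integrableOn_shotNoiseIntegrand_of_exponent_ne_zero {s : ℝ}
    (h : shotNoiseExponent ν s ≠ 0) : IntegrableOn (shotNoiseIntegrand ν) (Ioc 0 s) :=
  Integrable.of_integral_ne_zero h

theorem pos_of_shotNoiseExponent_ne_zero {s : ℝ} (h : shotNoiseExponent ν s ≠ 0) : 0 < s := by
  by_contra! hs
  exact h (by rw [shotNoiseExponent, Ioc_eq_empty (not_lt.2 hs), Measure.restrict_empty,
    integral_zero_measure])

theorem shotNoiseIntegrand_le_inv {u : ℝ} (hu : 0 < u) : shotNoiseIntegrand ν u ≤ u⁻¹ := by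
  rw [shotNoiseIntegrand, div_eq_mul_inv]
  exact mul_le_of_le_one_left (inv_pos.2 hu).le (by linarith [laplaceTransform_nonneg (μ := ν) u])

theorem shotNoiseExponent_sub {a b : ℝ} (ha : 0 ≤ a) (hab : a ≤ b)
    (hint : IntegrableOn (shotNoiseIntegrand ν) (Ioc 0 b)) :
    shotNoiseExponent ν b - shotNoiseExponent ν a = ∫ u in Ioc a b, shotNoiseIntegrand ν u := by
  rw [sub_eq_iff_eq_add', shotNoiseExponent, shotNoiseExponent, ← setIntegral_union
    (Ioc_disjoint_Ioc_of_le le_rfl) measurableSet_Ioc (hint.mono_set (Ioc_subset_Ioc_right hab))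
    (hint.mono_set (Ioc_subset_Ioc_left ha)), Ioc_union_Ioc_eq_Ioc ha hab]

variable [IsProbabilityMeasure ν]

theorem shotNoiseIntegrand_nonneg (hν : ∀ᵐ x ∂ν, 0 ≤ x) {u : ℝ} (hu : 0 < u) :
    0 ≤ shotNoiseIntegrand ν u :=
  div_nonneg (sub_nonneg.2 (laplaceTransform_le_one hν hu.le)) hu.le

theorem shotNoiseExponent_nonneg (hν : ∀ᵐ x ∂ν, 0 ≤ x) (s : ℝ) : 0 ≤ shotNoiseExponent ν s :=
  setIntegral_nonneg measurableSet_Ioc fun _ hu => shotNoiseIntegrand_nonneg hν hu.1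

theorem abs_shotNoiseExponent_sub_le (hν : ∀ᵐ x ∂ν, 0 ≤ x)
    (hint : ∀ b > 0, IntegrableOn (shotNoiseIntegrand ν) (Ioc 0 b)) {a b : ℝ} (ha : 0 < a)
    (hb : 0 < b) : |shotNoiseExponent ν b - shotNoiseExponent ν a| ≤ |log b - log a| := by
  wlog hab : a ≤ b generalizing a b
  · rw [abs_sub_comm, abs_sub_comm (log b)]
    exact this hb ha (le_of_not_ge hab)
  rw [shotNoiseExponent_sub ha.le hab (hint b hb), ← setIntegral_Ioc_inv ha hab,
    abs_of_nonneg (setIntegral_nonneg measurableSet_Ioc fun _ hu =>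
      shotNoiseIntegrand_nonneg hν (ha.trans hu.1)),
    abs_of_nonneg (setIntegral_nonneg measurableSet_Ioc fun _ hu => (inv_pos.2 (ha.trans hu.1)).le)]
  exact setIntegral_mono_on ((hint b hb).mono_set (Ioc_subset_Ioc_left ha.le))
    (integrableOn_Ioc_inv ha) measurableSet_Ioc fun _ hu =>
      shotNoiseIntegrand_le_inv (ha.trans hu.1)

theorem tendsto_shotNoiseExponent_atTop (hν : ∀ᵐ x ∂ν, 0 < x)
    (hint : ∀ b > 0, IntegrableOn (shotNoiseIntegrand ν) (Ioc 0 b)) :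
    Tendsto (shotNoiseExponent ν) atTop atTop := by
  obtain ⟨u₀, hu₀⟩ := eventually_atTop.1 <| (eventually_ge_atTop 1).and <|
    (tendsto_laplaceTransform_atTop hν).eventually (eventually_le_nhds (by norm_num : (0:ℝ) < 2⁻¹))
  have hu₀pos : 0 < u₀ := one_pos.trans_le (hu₀ u₀ le_rfl).1
  have hlower (s : ℝ) (hs : u₀ ≤ s) : 2⁻¹ * (log s - log u₀) ≤ shotNoiseExponent ν s := by
    have hsplit := shotNoiseExponent_sub hu₀pos.le hs (hint s (hu₀pos.trans_le hs))
    have hmono : ∫ u in Ioc u₀ s, 2⁻¹ * u⁻¹ ≤ ∫ u in Ioc u₀ s, shotNoiseIntegrand ν u :=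
      setIntegral_mono_on ((integrableOn_Ioc_inv hu₀pos).const_mul _)
        ((hint s (hu₀pos.trans_le hs)).mono_set (Ioc_subset_Ioc_left hu₀pos.le)) measurableSet_Ioc
        fun u hu => by
          rw [shotNoiseIntegrand, div_eq_mul_inv]
          exact mul_le_mul_of_nonneg_right (by linarith [(hu₀ u hu.1.le).2])
            (inv_pos.2 (hu₀pos.trans hu.1)).le
    rw [integral_const_mul, setIntegral_Ioc_inv hu₀pos hs] at hmono
    linarith [shotNoiseExponent_nonneg (hν.mono fun _ h => h.le) u₀]
  refine tendsto_atTop_mono' _ (eventually_atTop.2 ⟨u₀, hlower⟩) ?_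
  exact (tendsto_log_atTop.atTop_add tendsto_const_nhds).const_mul_atTop (by norm_num)

end ShotNoise

theorem tendsto_snLT_comp_div {ρ₁ ρ₂ : ℝ} (hρ₁ : 0 < ρ₁) {ν₁ ν₂ : Measure ℝ}
    [IsProbabilityMeasure ν₁] [IsProbabilityMeasure ν₂] (hν₁ : ∀ᵐ x ∂ν₁, 0 < x)
    (hν₂ : ∀ᵐ x ∂ν₂, 0 ≤ x) (hint₁ : ∀ b > 0, IntegrableOn (shotNoiseIntegrand ν₁) (Ioc 0 b))
    (hint₂ : ∀ b > 0, IntegrableOn (shotNoiseIntegrand ν₂) (Ioc 0 b)) {t : ℝ} (ht : 0 < t) :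
    Tendsto (fun s => snLT ρ₂ ν₂ (-log (snLT ρ₁ ν₁ (t * s))) / snLT ρ₂ ν₂ (-log (snLT ρ₁ ν₁ s)))
      atTop (𝓝 1) := by
  set F : ℝ → ℝ := fun s => ρ₁ * shotNoiseExponent ν₁ s
  have hF : Tendsto F atTop atTop :=
    (tendsto_shotNoiseExponent_atTop hν₁ hint₁).const_mul_atTop hρ₁
  have hFt : Tendsto (fun s => F (t * s)) atTop atTop :=
    hF.comp (tendsto_id.const_mul_atTop ht)
  have hlogF : Tendsto (fun s => log (F (t * s)) - log (F s)) atTop (𝓝 0) := by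
    refine tendsto_log_sub_log_of_abs_sub_le (C := ρ₁ * |log t|) hF ?_
    filter_upwards [eventually_gt_atTop 0] with s hs
    have hE := abs_shotNoiseExponent_sub_le (hν₁.mono fun _ h => h.le) hint₁ hs (mul_pos ht hs)
    rw [log_mul ht.ne' hs.ne', add_sub_cancel_right] at hE
    rw [← mul_sub, abs_mul, abs_of_pos hρ₁]
    exact mul_le_mul_of_nonneg_left hE hρ₁.le
  have hdiff : Tendsto (fun s => shotNoiseExponent ν₂ (F (t * s)) - shotNoiseExponent ν₂ (F s))
      atTop (𝓝 0) := by
    refine squeeze_zero_norm' ?_ (by simpa using hlogF.abs)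
    filter_upwards [hF.eventually_gt_atTop 0, hFt.eventually_gt_atTop 0] with s hs hts
    exact abs_shotNoiseExponent_sub_le hν₂ hint₂ hs hts
  have hratio (s : ℝ) : snLT ρ₂ ν₂ (-log (snLT ρ₁ ν₁ (t * s))) / snLT ρ₂ ν₂ (-log (snLT ρ₁ ν₁ s)) =
      exp (-(ρ₂ * (shotNoiseExponent ν₂ (F (t * s)) - shotNoiseExponent ν₂ (F s)))) := by
    rw [neg_log_snLT, neg_log_snLT, snLT_eq_exp, snLT_eq_exp, ← exp_sub]
    congr 1
    ring
  simp only [hratio]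
  simpa using (hdiff.const_mul ρ₂).neg.rexp

/- The integrand `(1 - ψ_ν u) / u` is integrable at `0` only when `ν` has a logarithmic moment;
otherwise `shotNoiseExponent` takes the junk value `0`. Positivity of the composed exponent, which
holds as soon as the subordinated law has no atom at `0`, rules this out. -/
theorem integrableOn_shotNoiseIntegrand_of_comp_pos {ρ₁ : ℝ} (hρ₁ : 0 < ρ₁) {ν₁ ν₂ : Measure ℝ}
    [IsProbabilityMeasure ν₁] (hν₁ : ∀ᵐ x ∂ν₁, 0 < x)
    (hpos : ∀ s > 0, 0 < shotNoiseExponent ν₂ (ρ₁ * shotNoiseExponent ν₁ s)) :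
    (∀ b > 0, IntegrableOn (shotNoiseIntegrand ν₁) (Ioc 0 b)) ∧
      ∀ b > 0, IntegrableOn (shotNoiseIntegrand ν₂) (Ioc 0 b) := by
  have hint₁ (b : ℝ) (hb : 0 < b) : IntegrableOn (shotNoiseIntegrand ν₁) (Ioc 0 b) :=
    integrableOn_shotNoiseIntegrand_of_exponent_ne_zero <| right_ne_zero_of_mul
      (pos_of_shotNoiseExponent_ne_zero (hpos b hb).ne').ne'
  refine ⟨hint₁, fun b _ => ?_⟩
  obtain ⟨s, hbs, hs⟩ := (((tendsto_shotNoiseExponent_atTop hν₁ hint₁).const_mul_atTop hρ₁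
    |>.eventually_ge_atTop b).and (eventually_gt_atTop 0)).exists
  exact (integrableOn_shotNoiseIntegrand_of_exponent_ne_zero (hpos s hs).ne').mono_set
    (Ioc_subset_Ioc_right hbs)

/-- **Proposition 3.1.** If `Φᵢ = Φ_{ρᵢ,νᵢ}` are shot noise Laplace transforms and `μ₃`
has Laplace transform `Φ₃(s) = Φ₂(−log Φ₁(s))` (the subordinated law), then `Φ₃` is
slowly varying at infinity and consequently `μ₃` is not selfdecomposable. -/
theorem subordinated_shot_noise_not_selfdecomposable
    (ρ₁ ρ₂ : ℝ) (hρ₁ : 0 < ρ₁) (hρ₂ : 0 < ρ₂)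
    (ν₁ ν₂ : Measure ℝ) [IsProbabilityMeasure ν₁] [IsProbabilityMeasure ν₂]
    (hν₁ : ν₁ (Set.Iic 0) = 0) (hν₂ : ν₂ (Set.Iic 0) = 0)
    (μ₃ : Measure ℝ) [IsProbabilityMeasure μ₃] (hμ₃ : μ₃ (Set.Iic 0) = 0)
    (hLT : ∀ s ≥ (0:ℝ),
      laplaceTransform μ₃ s = snLT ρ₂ ν₂ (-Real.log (snLT ρ₁ ν₁ s))) :
    (∀ t > (0:ℝ),
      Tendsto (fun s => snLT ρ₂ ν₂ (-Real.log (snLT ρ₁ ν₁ (t * s))) /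
          snLT ρ₂ ν₂ (-Real.log (snLT ρ₁ ν₁ s))) atTop (nhds 1)) ∧
    ¬ SelfDecomposable μ₃ := by
  have hν₁' := ae_pos_of_measure_Iic_eq_zero hν₁
  have hμ₃' := ae_pos_of_measure_Iic_eq_zero hμ₃
  have hpos (s : ℝ) (hs : 0 < s) : 0 < shotNoiseExponent ν₂ (ρ₁ * shotNoiseExponent ν₁ s) := by
    have h := laplaceTransform_lt_one hμ₃' hs
    rw [hLT s hs.le, neg_log_snLT, snLT_eq_exp, exp_lt_one_iff, neg_lt_zero] at h
    exact pos_of_mul_pos_right h hρ₂.le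
  obtain ⟨hint₁, hint₂⟩ := integrableOn_shotNoiseIntegrand_of_comp_pos hρ₁ hν₁' hpos
  have hslow (t : ℝ) (ht : 0 < t) := tendsto_snLT_comp_div hρ₁ hν₁'
    ((ae_pos_of_measure_Iic_eq_zero hν₂).mono fun _ h => h.le) hint₁ hint₂ (ρ₂ := ρ₂) ht
  refine ⟨hslow, not_selfDecomposable_of_tendsto_div hμ₃' ((hslow 2⁻¹ (by norm_num)).congr' ?_)⟩
  filter_upwards [eventually_ge_atTop 0] with s hs
  rw [hLT s hs, hLT _ (by positivity)]
end

section
/- The log-Cauchy distribution, i.e. the probability measure on (0,∞) with density f(x) = 1/(π x (1 + (log x)²)), is not selfdecomposable. (Example C.) -/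
open MeasureTheory Filter Set Real Topology

/-- The log-Cauchy distribution: the probability measure on `(0,∞)` with density
`1/(π x (1 + (log x)²))`. -/
noncomputable def logCauchy : Measure ℝ :=
  (volume.restrict (Set.Ioi 0)).withDensity
    (fun x => ENNReal.ofReal (1 / (π * x * (1 + Real.log x ^ 2))))

/-!
Write `F t = logCauchy (Iic t) = 1/2 + arctan (log t) / π` for `t > 0`. If
`logCauchy = μc ∗ (x ↦ x/2)_* logCauchy` with `μc` carried by `[0, ∞)`, then a sum of two
nonnegative terms is `≤ t` only if both are, so `F t ≤ μc [0, t] * F (2 t)`. Near `0`,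
`F t ~ 1 / (π |log t|)` varies slowly, so `F t / F (2 t) → 1` and `μc` is the unit mass at `0`.
Then `logCauchy` is invariant under `x ↦ x/2`, contradicting `F 1 < F 2`.
-/

open Asymptotics

lemma lintegral_Ioc_eq_of_hasDerivAt_of_tendsto {g g' : ℝ → ℝ} {a b ga : ℝ} (hab : a < b)
    (hderiv : ∀ x ∈ Ioc a b, HasDerivAt g (g' x) x) (hg' : ∀ x ∈ Ioc a b, 0 ≤ g' x)
    (ha : Tendsto g (𝓝[>] a) (𝓝 ga)) :
    ∫⁻ x in Ioc a b, ENNReal.ofReal (g' x) = ENNReal.ofReal (g b - ga) := by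
  set G := Function.update g a ga
  have hG : ContinuousOn G (Icc a b) := by
    rw [continuousOn_update_iff, Icc_sdiff_left]
    exact ⟨fun x hx => (hderiv x hx).continuousAt.continuousWithinAt,
      fun _ => ha.mono_left (nhdsWithin_mono _ Ioc_subset_Ioi_self)⟩
  have hG' : ∀ x ∈ Ioo a b, HasDerivAt G (g' x) x := fun x hx =>
    (hderiv x (Ioo_subset_Ioc_self hx)).congr_of_eventuallyEq <|
      eventually_ne_nhds hx.1.ne' |>.mono fun y hy => Function.update_of_ne hy _ _
  have hint := intervalIntegral.integrableOn_deriv_of_nonneg hG hG'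
    fun x hx => hg' x (Ioo_subset_Ioc_self hx)
  have hGa : G a = ga := Function.update_self ..
  have hGb : G b = g b := Function.update_of_ne hab.ne' _ _
  rw [← ofReal_integral_eq_lintegral_ofReal hint ((ae_restrict_iff' measurableSet_Ioc).2
      (Eventually.of_forall hg')), ← intervalIntegral.integral_of_le hab.le,
    intervalIntegral.integral_eq_sub_of_hasDerivAt_of_le hab.le hG hG'
      ((intervalIntegrable_iff_integrableOn_Ioc_of_le hab.le).2 hint),
    hGa, hGb]

lemma isEquivalent_arctan : arctan ~[𝓝 0] id := by
  simpa using! (hasDerivAt_arctan 0).isLittleO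

lemma tendsto_arctan_inv_div_arctan_inv_sub (L : ℝ) :
    Tendsto (fun u => arctan u⁻¹ / arctan (u - L)⁻¹) atTop (𝓝 1) := by
  have hshift : Tendsto (fun u : ℝ => u - L) atTop atTop :=
    tendsto_atTop_add_const_right _ _ tendsto_id
  have h₁ : (fun u : ℝ => arctan u⁻¹) ~[atTop] fun u => u⁻¹ :=
    isEquivalent_arctan.comp_tendsto tendsto_inv_atTop_zero
  have h₂ : (fun u : ℝ => arctan (u - L)⁻¹) ~[atTop] fun u => (u - L)⁻¹ :=
    isEquivalent_arctan.comp_tendsto (tendsto_inv_atTop_zero.comp hshift)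
  have h₃ : (fun u : ℝ => u - L) ~[atTop] id :=
    IsEquivalent.refl.sub_isLittleO (isLittleO_const_id_atTop L)
  refine (isEquivalent_iff_tendsto_one ?_).1 (h₁.trans (h₃.inv.symm.trans h₂.symm))
  filter_upwards [hshift.eventually_gt_atTop 0] with u hu
  exact (arctan_pos.2 (inv_pos.2 hu)).ne'

lemma one_half_add_arctan_neg_div_pi {u : ℝ} (hu : 0 < u) :
    1 / 2 + arctan (-u) / π = arctan u⁻¹ / π := by
  rw [arctan_neg, arctan_inv_of_pos hu]
  field_simp
  ring

lemma one_half_add_arctan_div_pi_pos (x : ℝ) : 0 < 1 / 2 + arctan x / π := by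
  have : -(1 / 2) < arctan x / π := by
    rw [lt_div_iff₀ pi_pos]
    linarith [neg_pi_div_two_lt_arctan x]
  linarith

lemma hasDerivAt_arctan_log_div_pi {x : ℝ} (hx : 0 < x) :
    HasDerivAt (fun y => arctan (log y) / π) (1 / (π * x * (1 + log x ^ 2))) x := by
  refine (((hasDerivAt_arctan (log x)).comp x (hasDerivAt_log hx.ne')).div_const π).congr_deriv ?_
  field_simp

lemma tendsto_arctan_log_div_pi_nhdsGT_zero :
    Tendsto (fun y => arctan (log y) / π) (𝓝[>] 0) (𝓝 (-(1 / 2))) := by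
  have := ((tendsto_arctan_atBot.mono_right nhdsWithin_le_nhds).comp
    tendsto_log_nhdsGT_zero).div_const π
  rwa [show -(π / 2) / π = -(1 / 2) by field_simp] at this

namespace MeasureTheory.Measure

variable {ν ρ : Measure ℝ}

lemma conv_apply_Iic [SFinite ρ] (t : ℝ) : (ν ∗ ρ) (Iic t) = ∫⁻ x, ρ (Iic (t - x)) ∂ν := by
  rw [Measure.conv, map_apply measurable_add measurableSet_Iic,
    prod_apply (measurable_add measurableSet_Iic)]
  congr! with x
  ext y
  simp [le_sub_iff_add_le']

lemma conv_Iic_le_mul [SFinite ρ] (hν : ν (Iio 0) = 0) (hρ : ρ (Iio 0) = 0) (t : ℝ) :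
    (ν ∗ ρ) (Iic t) ≤ ν (Iic t) * ρ (Iic t) := by
  rw [conv_apply_Iic, mul_comm, ← setLIntegral_const, ← lintegral_indicator measurableSet_Iic]
  refine lintegral_mono_ae ?_
  filter_upwards [measure_eq_zero_iff_ae_notMem.1 hν] with x hx
  rw [mem_Iio, not_lt] at hx
  by_cases hxt : x ≤ t
  · rw [indicator_of_mem (mem_Iic.2 hxt)]
    exact measure_mono (Iic_subset_Iic.2 (by linarith))
  · rw [measure_mono_null (Iic_subset_Iio.2 (by linarith)) hρ]
    exact zero_le

lemma measure_singleton_zero_mul_le_conv_Iic [SFinite ρ] (t : ℝ) :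
    ν {0} * ρ (Iic t) ≤ (ν ∗ ρ) (Iic t) := by
  rw [conv_apply_Iic, mul_comm, ← setLIntegral_const,
    ← lintegral_indicator (measurableSet_singleton 0)]
  refine lintegral_mono fun x => ?_
  by_cases hx : x = 0 <;> simp [hx]

lemma tendsto_measure_Iic_nhdsGT_zero [IsFiniteMeasure ν] (hν : ν (Iio 0) = 0) :
    Tendsto (fun t => ν (Iic t)) (𝓝[>] 0) (𝓝 (ν {0})) := by
  have hInter : ⋂ r > (0 : ℝ), Iic r = Iic 0 := by
    ext x
    simp only [mem_iInter, mem_Iic]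
    exact ⟨fun h => le_of_forall_gt_imp_ge_of_dense h, fun h r hr => h.trans hr.le⟩
  have h₀ : ν (Iic 0) = ν {0} := by
    rw [← Iio_union_right]
    exact measure_congr (union_ae_eq_right_of_ae_eq_empty (ae_eq_empty.mpr hν))
  have := tendsto_measure_biInter_gt (μ := ν) (s := Iic) (a := (0 : ℝ))
    (fun r _ => measurableSet_Iic.nullMeasurableSet) (fun i j _ hij => Iic_subset_Iic.2 hij)
    ⟨1, one_pos, measure_ne_top ν _⟩
  rwa [hInter, h₀] at this

end MeasureTheory.Measure

instance : SFinite logCauchy := by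
  unfold logCauchy
  infer_instance

lemma logCauchy_Iio_zero : logCauchy (Iio 0) = 0 := by
  refine withDensity_absolutelyContinuous _ _ ?_
  rw [Measure.restrict_apply measurableSet_Iio, Iio_inter_Ioi, Ioo_self, measure_empty]

lemma logCauchy_Iic {t : ℝ} (ht : 0 < t) :
    logCauchy (Iic t) = ENNReal.ofReal (1 / 2 + arctan (log t) / π) := by
  rw [logCauchy, withDensity_apply _ measurableSet_Iic, Measure.restrict_restrict measurableSet_Iic,
    Iic_inter_Ioi, lintegral_Ioc_eq_of_hasDerivAt_of_tendsto ht
      (fun x hx => hasDerivAt_arctan_log_div_pi hx.1) (fun x hx => by positivity [hx.1])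
      tendsto_arctan_log_div_pi_nhdsGT_zero, sub_neg_eq_add, add_comm]

lemma logCauchy_Iic_lt_Iic {s t : ℝ} (hs : 0 < s) (hst : s < t) :
    logCauchy (Iic s) < logCauchy (Iic t) := by
  rw [logCauchy_Iic hs, logCauchy_Iic (hs.trans hst),
    ENNReal.ofReal_lt_ofReal_iff_of_nonneg (one_half_add_arctan_div_pi_pos _).le]
  gcongr

lemma one_le_measure_singleton_zero_of_logCauchy_Iic_le {ν : Measure ℝ} [IsFiniteMeasure ν]
    (hν : ν (Iio 0) = 0)
    (h : ∀ t > 0, logCauchy (Iic t) ≤ ν (Iic t) * logCauchy (Iic (2 * t))) : 1 ≤ ν {0} := by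
  have hexp : Tendsto (fun u : ℝ => exp (-u)) atTop (𝓝[>] 0) :=
    tendsto_exp_atBot_nhdsGT.comp tendsto_neg_atTop_atBot
  have hratio : Tendsto (fun u => ENNReal.ofReal (arctan u⁻¹ / arctan (u - log 2)⁻¹)) atTop
      (𝓝 1) := by
    simpa using ENNReal.tendsto_ofReal (tendsto_arctan_inv_div_arctan_inv_sub (log 2))
  refine le_of_tendsto_of_tendsto hratio ((Measure.tendsto_measure_Iic_nhdsGT_zero hν).comp hexp) ?_
  filter_upwards [eventually_gt_atTop (log 2)] with u hu
  have hu₀ : 0 < u := (log_pos one_lt_two).trans hu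
  -- at `t = exp (-u)`: `F t = arctan u⁻¹ / π` and `F (2 t) = arctan (u - log 2)⁻¹ / π`
  have hbound := h _ (exp_pos (-u))
  rw [logCauchy_Iic (exp_pos _), logCauchy_Iic (by positivity), log_exp,
    log_mul two_ne_zero (exp_ne_zero _), log_exp, show log 2 + -u = -(u - log 2) by ring,
    one_half_add_arctan_neg_div_pi hu₀, one_half_add_arctan_neg_div_pi (sub_pos.2 hu)] at hbound
  have hpos : 0 < arctan (u - log 2)⁻¹ / π :=
    div_pos (arctan_pos.2 (inv_pos.2 (sub_pos.2 hu))) pi_pos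
  calc ENNReal.ofReal (arctan u⁻¹ / arctan (u - log 2)⁻¹)
      = ENNReal.ofReal (arctan u⁻¹ / π) / ENNReal.ofReal (arctan (u - log 2)⁻¹ / π) := by
        rw [← ENNReal.ofReal_div_of_pos hpos, div_div_div_cancel_right₀ pi_ne_zero]
    _ ≤ ν (Iic (exp (-u))) := ENNReal.div_le_of_le_mul hbound

/-- **Example C.** The log-Cauchy distribution is not selfdecomposable. -/
theorem logCauchy_not_selfdecomposable : ¬ SelfDecomposable logCauchy := by
  intro hsd
  obtain ⟨μc, _, hμc, hconv⟩ := hsd (1 / 2) ⟨by norm_num, by norm_num⟩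
  set ρ := Measure.map (fun x => 1 / 2 * x) logCauchy
  have hρ : ∀ t, ρ (Iic t) = logCauchy (Iic (2 * t)) := fun t => by
    rw [Measure.map_apply (measurable_const_mul _) measurableSet_Iic,
      preimage_const_mul_Iic₀ t one_half_pos, show t / (1 / 2) = 2 * t by ring]
  have hρ₀ : ρ (Iio 0) = 0 := by
    rw [Measure.map_apply (measurable_const_mul _) measurableSet_Iio,
      preimage_const_mul_Iio₀ 0 one_half_pos, zero_div, logCauchy_Iio_zero]
  have hatom : 1 ≤ μc {0} := one_le_measure_singleton_zero_of_logCauchy_Iic_le hμc fun t _ => by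
    rw [← hρ]
    calc logCauchy (Iic t) = (μc ∗ ρ) (Iic t) := by rw [← hconv]
      _ ≤ μc (Iic t) * ρ (Iic t) := Measure.conv_Iic_le_mul hμc hρ₀ t
  have hlower := Measure.measure_singleton_zero_mul_le_conv_Iic (ν := μc) (ρ := ρ) 1
  rw [← hconv, hρ, mul_one] at hlower
  exact (logCauchy_Iic_lt_Iic one_pos one_lt_two).not_ge
    ((le_mul_of_one_le_left zero_le hatom).trans hlower)
end

section
/- Let λ > 0, let (E_k)_{k≥1} be i.i.d. exponential random variables with rate λ, put τ_k = E_1 + ⋯ + E_k, and let (ξ_k)_{k≥1} be i.i.d. ℝ^d-valued random variables independent of (E_k). Then the series Σ_{k=1}^∞ e^{−τ_k} ξ_k converges almost surely if and only if E[log(1 + ‖ξ₁‖)] < ∞. (Example 1 of Section 4.) -/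
open MeasureTheory Filter Set ProbabilityTheory

open scoped ENNReal Topology

/-- The type family for the combined family of arrival increments (`ℝ`-valued, index
`Sum.inl k`) and jumps (`ℝ^d`-valued, index `Sum.inr k`). -/
abbrev jointType (d : ℕ) : ℕ ⊕ ℕ → Type
  | .inl _ => ℝ
  | .inr _ => EuclideanSpace ℝ (Fin d)

/-- The measurable space structures on the combined family. -/
def jointMS (d : ℕ) : (i : ℕ ⊕ ℕ) → MeasurableSpace (jointType d i)
  | .inl _ => inferInstance
  | .inr _ => inferInstance

/-- The combined family of random variables: the increments `E k` and the jumps `ξ k`. -/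
def jointFam {Ω : Type*} {d : ℕ} (E : ℕ → Ω → ℝ)
    (ξ : ℕ → Ω → EuclideanSpace ℝ (Fin d)) : (i : ℕ ⊕ ℕ) → Ω → jointType d i
  | .inl k => E k
  | .inr k => ξ k

/-! By the strong law of large numbers `τ_k / k → 1/λ` almost surely, so the `k`-th term of the
series has size `e^{-k/λ + o(k)} ‖ξ_k‖`. Hence the series converges as soon as
`log (1 + ‖ξ_k‖) ≤ c k` eventually for some `c < 1/λ` (geometric domination), and its terms can
only tend to zero if `log (1 + ‖ξ_k‖) ≤ C k` eventually for some finite `C`. For i.i.d.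
`Y_k = log (1 + ‖ξ_k‖) ≥ 0` and any `c > 0`, the two Borel–Cantelli lemmas show that
`Y_k ≤ c k` eventually holds almost surely iff `∑ P(Y_1 > c k) < ∞`, i.e. iff `E Y_1 < ∞`. -/

namespace ProbabilityTheory

variable {r : ℝ}

lemma ae_nonneg_expMeasure : ∀ᵐ x ∂expMeasure r, 0 ≤ x := by
  refine ae_iff.2 (measure_mono_null (t := Iio 0) (fun x hx => lt_of_not_ge hx) ?_)
  rw [expMeasure, gammaMeasure, withDensity_apply _ measurableSet_Iio]
  exact lintegral_gammaPDF_of_nonpos le_rfl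

lemma expMeasure_Ioi (hr : 0 < r) {t : ℝ} (ht : 0 ≤ t) :
    expMeasure r (Ioi t) = ENNReal.ofReal (Real.exp (-r * t)) := by
  have := isProbabilityMeasure_expMeasure hr
  have hexp : Real.exp (-(r * t)) ≤ 1 := Real.exp_le_one_iff.2 (by nlinarith)
  rw [← compl_Iic, prob_compl_eq_one_sub measurableSet_Iic, ← ofReal_cdf,
    cdf_expMeasure_eq hr, if_pos ht, ← ENNReal.ofReal_one,
    ← ENNReal.ofReal_sub _ (sub_nonneg.2 hexp), sub_sub_cancel, neg_mul]

lemma lintegral_ofReal_expMeasure (hr : 0 < r) :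
    ∫⁻ x, ENNReal.ofReal x ∂expMeasure r = ENNReal.ofReal r⁻¹ := by
  calc ∫⁻ x, ENNReal.ofReal x ∂expMeasure r
      = ∫⁻ t in Ioi 0, expMeasure r (Ioi t) :=
        lintegral_eq_lintegral_meas_lt _ ae_nonneg_expMeasure aemeasurable_id
    _ = ∫⁻ t in Ioi 0, ENNReal.ofReal (Real.exp (-r * t)) :=
        setLIntegral_congr_fun measurableSet_Ioi fun t ht => expMeasure_Ioi hr (le_of_lt ht)
    _ = ENNReal.ofReal r⁻¹ := by
        rw [← ofReal_integral_eq_lintegral_ofReal (integrableOn_exp_mul_Ioi (by linarith) 0)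
          (ae_of_all _ fun _ => (Real.exp_pos _).le), integral_exp_mul_Ioi (by linarith)]
        simp [div_neg, neg_div]

lemma integrable_id_expMeasure (hr : 0 < r) : Integrable id (expMeasure r) :=
  (lintegral_ofReal_ne_top_iff_integrable aestronglyMeasurable_id ae_nonneg_expMeasure).1
    (by simp [lintegral_ofReal_expMeasure hr])

lemma integral_id_expMeasure (hr : 0 < r) : ∫ x, x ∂expMeasure r = r⁻¹ := by
  rw [integral_eq_lintegral_of_nonneg_ae ae_nonneg_expMeasure aestronglyMeasurable_id,
    lintegral_ofReal_expMeasure hr, ENNReal.toReal_ofReal (by positivity)]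

end ProbabilityTheory

section LayerCake

variable {Ω : Type*} [MeasurableSpace Ω] {c : ℝ}

lemma tsum_ite_mul_lt_eq_natCeil (hc : 0 < c) (y : ℝ) :
    ∑' k : ℕ, (if c * k < y then 1 else 0 : ℝ≥0∞) = ⌈y / c⌉₊ := by
  have hlt (k : ℕ) : c * k < y ↔ k ∈ Finset.range ⌈y / c⌉₊ := by
    rw [Finset.mem_range, Nat.lt_ceil, lt_div_iff₀ hc, mul_comm]
  simp_rw [hlt]
  rw [tsum_eq_sum (s := Finset.range ⌈y / c⌉₊) (fun k hk => if_neg hk), Finset.sum_ite_mem]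
  simp

lemma tsum_measure_mul_lt_eq_lintegral_natCeil (μ : Measure Ω) (hc : 0 < c) {Y : Ω → ℝ}
    (hY : Measurable Y) :
    ∑' k : ℕ, μ {ω | c * k < Y ω} = ∫⁻ ω, (⌈Y ω / c⌉₊ : ℝ≥0∞) ∂μ := by
  have hms (k : ℕ) : MeasurableSet {ω | c * k < Y ω} := measurableSet_lt measurable_const hY
  simp_rw [← lintegral_indicator_one (hms _), ← tsum_ite_mul_lt_eq_natCeil hc]
  rw [← lintegral_tsum fun k => (measurable_one.indicator (hms k)).aemeasurable]
  rfl

lemma tsum_measure_mul_lt_lt_top_iff (μ : Measure Ω) [IsFiniteMeasure μ] (hc : 0 < c)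
    {Y : Ω → ℝ} (hY : Measurable Y) :
    ∑' k : ℕ, μ {ω | c * k < Y ω} < ∞ ↔ ∫⁻ ω, ENNReal.ofReal (Y ω) ∂μ < ∞ := by
  rw [tsum_measure_mul_lt_eq_lintegral_natCeil μ hc hY]
  have hdiv : ∫⁻ ω, ENNReal.ofReal (Y ω / c) ∂μ =
      ENNReal.ofReal c⁻¹ * ∫⁻ ω, ENNReal.ofReal (Y ω) ∂μ := by
    simp_rw [div_eq_mul_inv, mul_comm _ c⁻¹, ENNReal.ofReal_mul (inv_nonneg.2 hc.le)]
    exact lintegral_const_mul _ hY.ennreal_ofReal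
  have hlow : ∫⁻ ω, ENNReal.ofReal (Y ω / c) ∂μ ≤ ∫⁻ ω, (⌈Y ω / c⌉₊ : ℝ≥0∞) ∂μ :=
    lintegral_mono fun ω => by
      rw [← ENNReal.ofReal_natCast]; exact ENNReal.ofReal_le_ofReal (Nat.le_ceil _)
  have hup : ∫⁻ ω, (⌈Y ω / c⌉₊ : ℝ≥0∞) ∂μ ≤ ∫⁻ ω, ENNReal.ofReal (Y ω / c) + 1 ∂μ :=
    lintegral_mono fun ω => by
      rcases le_or_gt (Y ω / c) 0 with hle | hpos
      · simp [Nat.ceil_eq_zero.2 hle]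
      · rw [← ENNReal.ofReal_natCast, ← ENNReal.ofReal_one,
          ← ENNReal.ofReal_add hpos.le zero_le_one]
        exact ENNReal.ofReal_le_ofReal (Nat.ceil_lt_add_one hpos.le).le
  rw [lintegral_add_right _ measurable_const, hdiv] at hup
  rw [hdiv] at hlow
  constructor
  · intro h
    exact ENNReal.lt_top_of_mul_ne_top_right (hlow.trans_lt h).ne (by simpa using hc)
  · intro h
    exact hup.trans_lt (ENNReal.add_lt_top.2 ⟨ENNReal.mul_lt_top ENNReal.ofReal_lt_top h,
      by simp⟩)

end LayerCake

lemma ProbabilityTheory.iIndepFun.iIndepSet_preimage {Ω ι β : Type*} [MeasurableSpace Ω]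
    {μ : Measure Ω} [MeasurableSpace β] {Y : ι → Ω → β} (h : iIndepFun Y μ)
    (hY : ∀ i, Measurable (Y i)) {S : ι → Set β} (hS : ∀ i, MeasurableSet (S i)) :
    iIndepSet (fun i => Y i ⁻¹' S i) μ :=
  ((iIndepFun_iff_iIndep _ _ _).1 h).iIndepSets'.iIndepSet_of_mem
    (fun i => comap_measurable (Y i) (hS i)) (fun i => hY i (hS i))

section BorelCantelli

variable {Ω : Type*} [MeasurableSpace Ω] {μ : Measure Ω} {Y : ℕ → Ω → ℝ} {c : ℝ}

lemma measure_mul_lt_eq_of_identDistrib (hident : ∀ k, IdentDistrib (Y k) (Y 0) μ μ) (k : ℕ) :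
    μ {ω | c * k < Y k ω} = μ {ω | c * k < Y 0 ω} :=
  (hident k).measure_mem_eq measurableSet_Ioi

lemma ae_eventually_le_mul_of_lintegral_lt_top [IsFiniteMeasure μ] (hc : 0 < c)
    (hY : Measurable (Y 0)) (hident : ∀ k, IdentDistrib (Y k) (Y 0) μ μ)
    (hint : ∫⁻ ω, ENNReal.ofReal (Y 0 ω) ∂μ < ∞) :
    ∀ᵐ ω ∂μ, ∀ᶠ k in atTop, Y k ω ≤ c * k := by
  have hsum : ∑' k : ℕ, μ {ω | c * k < Y k ω} ≠ ∞ := by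
    simp_rw [measure_mul_lt_eq_of_identDistrib hident]
    exact ((tsum_measure_mul_lt_lt_top_iff μ hc hY).2 hint).ne
  filter_upwards [ae_eventually_notMem hsum] with ω hω
  exact hω.mono fun k hk => not_lt.1 hk

lemma lintegral_lt_top_of_ae_eventually_le_mul (hc : 0 < c) (hY : ∀ k, Measurable (Y k))
    (hindep : iIndepFun Y μ) (hident : ∀ k, IdentDistrib (Y k) (Y 0) μ μ)
    (hle : ∀ᵐ ω ∂μ, ∀ᶠ k in atTop, Y k ω ≤ c * k) :
    ∫⁻ ω, ENNReal.ofReal (Y 0 ω) ∂μ < ∞ := by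
  have := hindep.isProbabilityMeasure
  have hms (k : ℕ) : MeasurableSet {ω | c * k < Y k ω} := hY k measurableSet_Ioi
  rw [← tsum_measure_mul_lt_lt_top_iff μ hc (hY 0), lt_top_iff_ne_top]
  simp_rw [← measure_mul_lt_eq_of_identDistrib hident]
  intro hsum
  have hone := measure_limsup_eq_one hms
    (hindep.iIndepSet_preimage hY fun k => measurableSet_Ioi) hsum
  have hzero : μ (limsup (fun k => {ω | c * k < Y k ω}) atTop) = 0 := by
    refine measure_eq_zero_iff_ae_notMem.2 ?_
    filter_upwards [hle] with ω hω
    rw [mem_limsup_iff_frequently_mem, not_frequently]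
    exact hω.mono fun k hk => not_lt.2 hk
  simp [hzero] at hone

end BorelCantelli

lemma tendsto_zero_of_tendsto_sum_range {G : Type*} [AddCommGroup G] [TopologicalSpace G]
    [IsTopologicalAddGroup G] {f : ℕ → G} {l : G}
    (h : Tendsto (fun n => ∑ i ∈ Finset.range n, f i) atTop (𝓝 l)) :
    Tendsto f atTop (𝓝 0) := by
  simpa [Finset.sum_range_succ, sub_self] using (h.comp (tendsto_add_atTop_nat 1)).sub h

section Growth

variable {u : ℕ → ℝ} {m : ℝ}

lemma Filter.Tendsto.succ_div_natCast (h : Tendsto (fun n : ℕ => u n / n) atTop (𝓝 m)) :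
    Tendsto (fun n : ℕ => u (n + 1) / n) atTop (𝓝 m) := by
  have hshift := (h.comp (tendsto_add_atTop_nat 1)).mul
    ((tendsto_const_nhds (x := (1 : ℝ))).add tendsto_inv_atTop_nhds_zero_nat)
  rw [add_zero, mul_one] at hshift
  refine hshift.congr' ((eventually_ne_atTop 0).mono fun n hn => ?_)
  simp only [Function.comp_apply, Nat.cast_add, Nat.cast_one]
  field_simp

lemma eventually_mul_le_of_tendsto_div {a : ℝ}
    (h : Tendsto (fun n : ℕ => u n / n) atTop (𝓝 m)) (ha : a < m) :
    ∀ᶠ n : ℕ in atTop, a * n ≤ u n := by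
  filter_upwards [h.eventually (lt_mem_nhds ha), eventually_gt_atTop 0] with n hn hn0
  rw [lt_div_iff₀ (by positivity)] at hn
  exact hn.le

lemma eventually_le_mul_of_tendsto_div {b : ℝ}
    (h : Tendsto (fun n : ℕ => u n / n) atTop (𝓝 m)) (hb : m < b) :
    ∀ᶠ n : ℕ in atTop, u n ≤ b * n := by
  filter_upwards [h.eventually (gt_mem_nhds hb), eventually_gt_atTop 0] with n hn hn0
  rw [div_lt_iff₀ (by positivity)] at hn
  exact hn.le

end Growth

section ExpWeightedSeries

variable {F : Type*} [NormedAddCommGroup F] [NormedSpace ℝ F] {τ : ℕ → ℝ} {x : ℕ → F}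

lemma summable_exp_neg_smul_of_log_le [CompleteSpace F] {a c : ℝ} (hca : c < a)
    (hτ : ∀ᶠ k : ℕ in atTop, a * k ≤ τ k)
    (hx : ∀ᶠ k : ℕ in atTop, Real.log (1 + ‖x k‖) ≤ c * k) :
    Summable fun k => Real.exp (-τ k) • x k := by
  refine .of_norm_bounded_eventually_nat (g := fun k => Real.exp (c - a) ^ k)
    (summable_geometric_of_lt_one (Real.exp_nonneg _) (Real.exp_lt_one_iff.2 (by linarith))) ?_
  filter_upwards [hτ, hx] with k hτk hxk
  have hxk' : ‖x k‖ ≤ Real.exp (c * k) := by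
    have := (Real.log_le_iff_le_exp (by positivity)).1 hxk
    linarith
  calc ‖Real.exp (-τ k) • x k‖ = Real.exp (-τ k) * ‖x k‖ := by
        rw [norm_smul, Real.norm_of_nonneg (Real.exp_nonneg _)]
    _ ≤ Real.exp (-(a * k)) * Real.exp (c * k) := by gcongr
    _ = Real.exp (c - a) ^ k := by rw [← Real.exp_add, ← Real.exp_nat_mul]; ring_nf

lemma eventually_log_le_of_tendsto_exp_neg_smul {b : ℝ} (hb : 0 ≤ b)
    (hτ : ∀ᶠ k : ℕ in atTop, τ k ≤ b * k)
    (hx : Tendsto (fun k => Real.exp (-τ k) • x k) atTop (𝓝 0)) :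
    ∀ᶠ k : ℕ in atTop, Real.log (1 + ‖x k‖) ≤ (b + 1) * k := by
  filter_upwards [hτ, hx.norm.eventually (gt_mem_nhds (norm_zero (E := F) ▸ zero_lt_one)),
    eventually_ge_atTop 1] with k hτk hxk hk
  rw [norm_smul, Real.norm_of_nonneg (Real.exp_nonneg _)] at hxk
  have hxk' : ‖x k‖ ≤ Real.exp (b * k) := by
    have := Real.exp_le_exp.2 hτk
    rw [Real.exp_neg] at hxk
    calc ‖x k‖ = Real.exp (τ k) * ((Real.exp (τ k))⁻¹ * ‖x k‖) := by
          rw [mul_inv_cancel_left₀ (Real.exp_ne_zero _)]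
      _ ≤ Real.exp (b * k) * 1 := by gcongr
      _ = Real.exp (b * k) := mul_one _
  have htwo : 2 ≤ Real.exp k := by
    have := Real.add_one_le_exp (k : ℝ)
    have : (1 : ℝ) ≤ k := by exact_mod_cast hk
    linarith
  have hone : 1 ≤ Real.exp (b * k) := Real.one_le_exp (by positivity)
  rw [Real.log_le_iff_le_exp (by positivity), add_mul, one_mul, Real.exp_add]
  nlinarith

end ExpWeightedSeries

lemma ae_tendsto_sum_range_succ_div {Ω : Type*} [MeasurableSpace Ω] {μ : Measure Ω}
    (X : ℕ → Ω → ℝ) (hint : Integrable (X 0) μ) (hindep : Pairwise fun i j => X i ⟂ᵢ[μ] X j)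
    (hident : ∀ i, IdentDistrib (X i) (X 0) μ μ) :
    ∀ᵐ ω ∂μ, Tendsto (fun n : ℕ => (∑ i ∈ Finset.range (n + 1), X i ω) / n) atTop
      (𝓝 μ[X 0]) := by
  filter_upwards [strong_law_ae_real X hint hindep hident] with ω hω
  exact hω.succ_div_natCast

lemma ae_tendsto_sum_range_succ_div_of_map_eq_expMeasure {Ω : Type*} [MeasurableSpace Ω]
    {μ : Measure Ω} {lam : ℝ} (hlam : 0 < lam) {E : ℕ → Ω → ℝ} (hEm : ∀ k, Measurable (E k))
    (hindep : Pairwise fun i j => E i ⟂ᵢ[μ] E j) (hE : ∀ k, μ.map (E k) = expMeasure lam) :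
    ∀ᵐ ω ∂μ, Tendsto (fun n : ℕ => (∑ i ∈ Finset.range (n + 1), E i ω) / n) atTop
      (𝓝 lam⁻¹) := by
  have hident (k : ℕ) : IdentDistrib (E k) (E 0) μ μ :=
    ⟨(hEm k).aemeasurable, (hEm 0).aemeasurable, by rw [hE k, hE 0]⟩
  have hint : Integrable id (μ.map (E 0)) := by
    rw [hE 0]; exact integrable_id_expMeasure hlam
  have hmean : μ[E 0] = lam⁻¹ := by
    rw [← integral_id_expMeasure hlam, ← hE 0]
    exact (integral_map (hEm 0).aemeasurable aestronglyMeasurable_id).symm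
  simpa only [hmean] using
    ae_tendsto_sum_range_succ_div E (hint.comp_measurable (hEm 0)) hindep hident

section JointFamily

variable {Ω : Type*} [MeasurableSpace Ω] {P : Measure Ω} {d : ℕ} {E : ℕ → Ω → ℝ}
  {ξ : ℕ → Ω → EuclideanSpace ℝ (Fin d)}

lemma pairwise_indepFun_of_iIndepFun_jointFam
    (h : iIndepFun (m := jointMS d) (jointFam E ξ) P) : Pairwise fun i j => E i ⟂ᵢ[P] E j :=
  fun _ _ hij => h.indepFun (Sum.inl_injective.ne hij)

lemma iIndepFun_of_iIndepFun_jointFam (h : iIndepFun (m := jointMS d) (jointFam E ξ) P) :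
    iIndepFun ξ P := by
  have h_inr := h.precomp Sum.inr_injective
  exact h_inr

end JointFamily

/-- **Example 1 of Section 4.** Let `τ_k` be the arrival times of a Poisson process with
intensity `λ` (partial sums of i.i.d. rate-`λ` exponentials `E_k`) and let `(ξ_k)` be
i.i.d. `ℝ^d`-valued random variables independent of `(E_k)`. Then `Σ_k e^{−τ_k} ξ_k`
converges a.s. iff `E[log(1+‖ξ₁‖)] < ∞`. -/
theorem exp_shot_noise_series_converges_iff_log_moment
    {Ω : Type*} [MeasurableSpace Ω] (P : Measure Ω) [IsProbabilityMeasure P]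
    {d : ℕ} (lam : ℝ) (hlam : 0 < lam)
    (E : ℕ → Ω → ℝ) (ξ : ℕ → Ω → EuclideanSpace ℝ (Fin d))
    (hEm : ∀ k, Measurable (E k)) (hξm : ∀ k, Measurable (ξ k))
    (hindep : iIndepFun (m := jointMS d) (jointFam E ξ) P)
    (hE : ∀ k, Measure.map (E k) P = expMeasure lam)
    (hξ : ∀ k, Measure.map (ξ k) P = Measure.map (ξ 0) P) :
    (∀ᵐ ω ∂P, ∃ l : EuclideanSpace ℝ (Fin d),
        Tendsto (fun n => ∑ k ∈ Finset.range n,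
            Real.exp (-(∑ i ∈ Finset.range (k + 1), E i ω)) • ξ k ω)
          atTop (nhds l)) ↔
      ∫⁻ ω, ENNReal.ofReal (Real.log (1 + ‖ξ 0 ω‖)) ∂P < ⊤ := by
  have hlog : Measurable fun x : EuclideanSpace ℝ (Fin d) => Real.log (1 + ‖x‖) := by fun_prop
  have hτ := ae_tendsto_sum_range_succ_div_of_map_eq_expMeasure hlam hEm
    (pairwise_indepFun_of_iIndepFun_jointFam hindep) hE
  have hYm (k : ℕ) : Measurable fun ω => Real.log (1 + ‖ξ k ω‖) := hlog.comp (hξm k)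
  have hYindep : iIndepFun (fun k ω => Real.log (1 + ‖ξ k ω‖)) P :=
    (iIndepFun_of_iIndepFun_jointFam hindep).comp _ fun _ => hlog
  have hYident (k : ℕ) : IdentDistrib (fun ω => Real.log (1 + ‖ξ k ω‖))
      (fun ω => Real.log (1 + ‖ξ 0 ω‖)) P P :=
    IdentDistrib.comp ⟨(hξm k).aemeasurable, (hξm 0).aemeasurable, hξ k⟩ hlog
  have hlam' : 0 < lam⁻¹ := inv_pos.2 hlam
  constructor
  · intro hconv
    refine lintegral_lt_top_of_ae_eventually_le_mul (c := lam⁻¹ + 1 + 1) (by positivity)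
      hYm hYindep hYident ?_
    filter_upwards [hconv, hτ] with ω ⟨l, hl⟩ hτω
    exact eventually_log_le_of_tendsto_exp_neg_smul (by positivity)
      (eventually_le_mul_of_tendsto_div hτω (lt_add_one _)) (tendsto_zero_of_tendsto_sum_range hl)
  · intro hint
    filter_upwards [ae_eventually_le_mul_of_lintegral_lt_top (c := lam⁻¹ / 3) (by positivity)
      (hYm 0) hYident hint, hτ] with ω hξω hτω
    have hsum := summable_exp_neg_smul_of_log_le (a := lam⁻¹ / 2) (by linarith)
      (eventually_mul_le_of_tendsto_div hτω (by linarith)) hξω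
    exact ⟨_, hsum.hasSum.tendsto_sum_nat⟩
end
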